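/- Let δ > 0, s₀ ∈ ℂ with s₀ ≠ 0, and let f : [0,∞) → ℂ be continuous with |f(ξ)| ≤ C e^{−δξ} for all ξ ≥ 0 and some constant C. For z in the open unit disc with z ≠ 1 and Re(s₀(z+1)/(z−1)) > −δ, define (𝓜𝓛f)(z) = (Lf)(s₀(z+1)/(z−1))/(z−1), where (Lg)(s) = ∫₀^∞ e^{−sξ} g(ξ) dξ. Then the Möbius-transformed Laplace transform of the function ξ ↦ ξ·f(ξ) satisfies (𝓜𝓛(ξ·f(ξ)))(z) = s₀^{−1}·( ((z−1)²/2)·(𝓜𝓛f)′(z) + ((z−1)/2)·(𝓜𝓛f)(z) ) for all such z. -/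

import Mathlib

/-!
Differentiating under the integral sign gives `(Lf)′ = −L(ξ f)` on the half-plane `Re s > −δ`,
the exponential decay of `f` providing a dominating function uniformly near each `s`.
The Möbius substitution `s = s₀(z+1)/(z−1)` has derivative `−2s₀/(z−1)²`, and with it the chain rule
turns `𝒫(𝓜G)` into `−s₀ (𝓜G′)`: the terms in `G` itself cancel between the two summands of `𝒫`.
-/

open Complex MeasureTheory Set

variable {E : Type*} [NormedAddCommGroup E] [NormedSpace ℂ E]

noncomputable section

def laplace (f : ℝ → E) (s : ℂ) : E :=
  ∫ ξ in Ioi (0 : ℝ), cexp (-s * ξ) • f ξ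

def moebiusTransform (s₀ : ℂ) (G : ℂ → E) (z : ℂ) : E :=
  (z - 1)⁻¹ • G (s₀ * (z + 1) / (z - 1))

def radialMulOperator (F : ℂ → E) (z : ℂ) : E :=
  ((z - 1) ^ 2 / 2) • deriv F z + ((z - 1) / 2) • F z

end

lemma norm_cexp_neg_mul_ofReal (s : ℂ) (ξ : ℝ) : ‖cexp (-s * ξ)‖ = Real.exp (-s.re * ξ) := by
  rw [Complex.norm_exp]
  simp

lemma integrableOn_Ioi_mul_exp_neg_mul {a : ℝ} (ha : 0 < a) :
    IntegrableOn (fun ξ : ℝ => ξ * Real.exp (-a * ξ)) (Ioi 0) := by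
  refine (integrableOn_rpow_mul_exp_neg_mul_rpow (p := 1) (s := 1) (by norm_num) one_pos
    ha).congr_fun (fun ξ _ => ?_) measurableSet_Ioi
  norm_num

section Laplace

variable {f : ℝ → E} {δ C : ℝ}

lemma norm_cexp_smul_le (hbf : ∀ ξ, 0 < ξ → ‖f ξ‖ ≤ C * Real.exp (-δ * ξ)) (w : ℂ) {ξ : ℝ}
    (hξ : 0 < ξ) : ‖cexp (-w * ξ) • f ξ‖ ≤ C * Real.exp (-(w.re + δ) * ξ) :=
  calc ‖cexp (-w * ξ) • f ξ‖ = Real.exp (-w.re * ξ) * ‖f ξ‖ := by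
        rw [norm_smul, norm_cexp_neg_mul_ofReal]
    _ ≤ Real.exp (-w.re * ξ) * (C * Real.exp (-δ * ξ)) := by gcongr; exact hbf ξ hξ
    _ = C * Real.exp (-(w.re + δ) * ξ) := by
        rw [show -(w.re + δ) * ξ = -w.re * ξ + -δ * ξ by ring, Real.exp_add]; ring

lemma aestronglyMeasurable_cexp_smul (hf : AEStronglyMeasurable f (volume.restrict (Ioi 0)))
    (w : ℂ) : AEStronglyMeasurable (fun ξ : ℝ => cexp (-w * ξ) • f ξ) (volume.restrict (Ioi 0)) :=
  (by fun_prop : Continuous fun ξ : ℝ => cexp (-w * ξ)).aestronglyMeasurable.smul hf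

lemma integrableOn_cexp_smul (hf : AEStronglyMeasurable f (volume.restrict (Ioi 0)))
    (hbf : ∀ ξ, 0 < ξ → ‖f ξ‖ ≤ C * Real.exp (-δ * ξ)) {s : ℂ} (hs : -δ < s.re) :
    IntegrableOn (fun ξ : ℝ => cexp (-s * ξ) • f ξ) (Ioi 0) := by
  refine Integrable.mono' ((exp_neg_integrableOn_Ioi 0 (by linarith : 0 < s.re + δ)).const_mul C)
    (aestronglyMeasurable_cexp_smul hf s) ?_
  rw [ae_restrict_iff' measurableSet_Ioi]
  exact Filter.Eventually.of_forall fun ξ hξ => norm_cexp_smul_le hbf s hξ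

theorem hasDerivAt_laplace [CompleteSpace E] (hf : AEStronglyMeasurable f (volume.restrict (Ioi 0)))
    (hbf : ∀ ξ, 0 < ξ → ‖f ξ‖ ≤ C * Real.exp (-δ * ξ)) {s : ℂ} (hs : -δ < s.re) :
    HasDerivAt (laplace f) (-laplace (fun ξ => (ξ : ℂ) • f ξ) s) s := by
  have hC : 0 ≤ C := nonneg_of_mul_nonneg_left ((norm_nonneg _).trans (hbf 1 one_pos))
    (Real.exp_pos _)
  -- on the ball of radius `ε` around `s` the decay rate `Re w + δ` stays above `ε`
  set ε := (s.re + δ) / 2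
  have hε : 0 < ε := by simp only [ε]; linarith
  have hF' : ∀ᵐ ξ : ℝ ∂volume.restrict (Ioi 0), ∀ w ∈ Metric.ball s ε,
      ‖-(ξ : ℂ) • cexp (-w * ξ) • f ξ‖ ≤ C * (ξ * Real.exp (-ε * ξ)) := by
    rw [ae_restrict_iff' measurableSet_Ioi]
    refine Filter.Eventually.of_forall fun ξ (hξ : 0 < ξ) w hw => ?_
    have hw : s.re - ε < w.re := by
      have := (abs_lt.mp ((abs_re_le_norm (w - s)).trans_lt (mem_ball_iff_norm.mp hw))).1
      rw [sub_re] at this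
      linarith
    calc ‖-(ξ : ℂ) • cexp (-w * ξ) • f ξ‖ = ξ * ‖cexp (-w * ξ) • f ξ‖ := by
          rw [norm_smul, norm_neg, norm_real, Real.norm_of_nonneg hξ.le]
      _ ≤ ξ * (C * Real.exp (-(w.re + δ) * ξ)) := by gcongr; exact norm_cexp_smul_le hbf w hξ
      _ ≤ C * (ξ * Real.exp (-ε * ξ)) := by
          rw [mul_left_comm]
          gcongr
          simp only [ε] at hw ⊢
          nlinarith
  have hderiv : ∀ ξ : ℝ, ∀ w : ℂ,
      HasDerivAt (fun w : ℂ => cexp (-w * ξ) • f ξ) (-(ξ : ℂ) • cexp (-w * ξ) • f ξ) w := by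
    intro ξ w
    have h := (((hasDerivAt_id w).neg.mul_const (ξ : ℂ)).cexp).smul_const (f ξ)
    simpa [smul_smul, mul_comm] using h
  have key := hasDerivAt_integral_of_dominated_loc_of_deriv_le (Metric.ball_mem_nhds s hε)
    (Filter.Eventually.of_forall (aestronglyMeasurable_cexp_smul hf))
    (integrableOn_cexp_smul hf hbf hs)
    ((continuous_ofReal.neg.aestronglyMeasurable).smul (aestronglyMeasurable_cexp_smul hf s))
    hF' ((integrableOn_Ioi_mul_exp_neg_mul hε).const_mul C)
    (Filter.Eventually.of_forall fun ξ w _ => hderiv ξ w)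
  refine key.2.congr_deriv ?_
  rw [laplace, ← integral_neg]
  congr 1 with ξ
  rw [neg_smul, smul_comm]

end Laplace

theorem hasDerivAt_moebiusTransform {s₀ z : ℂ} {G : ℂ → E} {G' : E} (hz : z ≠ 1)
    (hG : HasDerivAt G G' (s₀ * (z + 1) / (z - 1))) :
    HasDerivAt (moebiusTransform s₀ G)
      ((-2 * s₀ / (z - 1) ^ 3) • G' - ((z - 1) ^ 2)⁻¹ • G (s₀ * (z + 1) / (z - 1))) z := by
  have hz' : z - 1 ≠ 0 := sub_ne_zero.mpr hz
  have hσ : HasDerivAt (fun w => s₀ * (w + 1) / (w - 1)) (-2 * s₀ / (z - 1) ^ 2) z := by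
    refine ((((hasDerivAt_id' z).add_const 1).const_mul s₀).div ((hasDerivAt_id' z).sub_const 1)
      hz').congr_deriv ?_
    field_simp
    ring
  have hinv : HasDerivAt (fun w : ℂ => (w - 1)⁻¹) (-((z - 1) ^ 2)⁻¹) z := by
    refine (((hasDerivAt_id' z).sub_const 1).inv hz').congr_deriv ?_
    simp [neg_div]
  refine (hinv.smul (hG.scomp z hσ)).congr_deriv ?_
  rw [smul_smul, neg_smul, ← sub_eq_add_neg, Function.comp_apply]
  congr 2
  field_simp

theorem radialMulOperator_moebiusTransform {s₀ z : ℂ} {G : ℂ → E} {G' : E} (hz : z ≠ 1)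
    (hG : HasDerivAt G G' (s₀ * (z + 1) / (z - 1))) :
    radialMulOperator (moebiusTransform s₀ G) z = (-s₀ / (z - 1)) • G' := by
  have hz' : z - 1 ≠ 0 := sub_ne_zero.mpr hz
  rw [radialMulOperator, (hasDerivAt_moebiusTransform hz hG).deriv, moebiusTransform, smul_sub,
    smul_smul, smul_smul, smul_smul]
  have h₁ : (z - 1) ^ 2 / 2 * (-2 * s₀ / (z - 1) ^ 3) = -s₀ / (z - 1) := by field_simp
  have h₂ : (z - 1) ^ 2 / 2 * ((z - 1) ^ 2)⁻¹ = (z - 1) / 2 * (z - 1)⁻¹ := by field_simp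
  rw [h₁, h₂, sub_add_cancel]

theorem moebius_laplace_of_multiplication_by_xi_general
    (δ : ℝ) (s₀ : ℂ) (hs₀ : s₀ ≠ 0) (f : ℝ → ℂ) (C : ℝ)
    (hf : ContinuousOn f (Ici 0))
    (hbf : ∀ ξ : ℝ, 0 ≤ ξ → ‖f ξ‖ ≤ C * Real.exp (-δ * ξ))
    (M : ℂ → ℂ)
    (hM : ∀ z : ℂ, M z =
      (∫ ξ in Ioi (0 : ℝ), Complex.exp (-(s₀ * (z + 1) / (z - 1)) * ξ) * f ξ) / (z - 1)) :
    ∀ z : ℂ, ‖z‖ < 1 → z ≠ 1 → -δ < (s₀ * (z + 1) / (z - 1)).re →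
      (∫ ξ in Ioi (0 : ℝ),
          Complex.exp (-(s₀ * (z + 1) / (z - 1)) * ξ) * ((ξ : ℂ) * f ξ)) / (z - 1) =
        s₀⁻¹ * ((z - 1) ^ 2 / 2 * deriv M z + (z - 1) / 2 * M z) := by
  intro z _ hz hre
  have hMeq : M = moebiusTransform s₀ (laplace f) := funext fun w => by
    rw [hM w, moebiusTransform, smul_eq_mul, inv_mul_eq_div]; rfl
  have hL := hasDerivAt_laplace
    ((hf.mono Ioi_subset_Ici_self).aestronglyMeasurable measurableSet_Ioi)
    (fun ξ hξ => hbf ξ hξ.le) hre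
  have hP := radialMulOperator_moebiusTransform hz hL
  rw [radialMulOperator, ← hMeq] at hP
  simp only [smul_eq_mul] at hP
  rw [hP]
  change laplace (fun ξ => (ξ : ℂ) * f ξ) _ / (z - 1) = _
  field_simp

/-- The operator `𝒫` realizing multiplication by the radial variable: for
`(𝓜𝓛f)(z) = (Lf)(s₀(z+1)/(z−1))/(z−1)` one has
`(𝓜𝓛(ξ·f(ξ)))(z) = s₀⁻¹ ((z−1)²/2 (𝓜𝓛f)′(z) + (z−1)/2 (𝓜𝓛f)(z))`. -/
theorem moebius_laplace_of_multiplication_by_xi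
    (δ : ℝ) (hδ : 0 < δ) (s₀ : ℂ) (hs₀ : s₀ ≠ 0) (f : ℝ → ℂ) (C : ℝ)
    (hf : ContinuousOn f (Ici 0))
    (hbf : ∀ ξ : ℝ, 0 ≤ ξ → ‖f ξ‖ ≤ C * Real.exp (-δ * ξ))
    (M : ℂ → ℂ)
    (hM : ∀ z : ℂ, M z =
      (∫ ξ in Ioi (0 : ℝ), Complex.exp (-(s₀ * (z + 1) / (z - 1)) * ξ) * f ξ) / (z - 1)) :
    ∀ z : ℂ, ‖z‖ < 1 → z ≠ 1 → -δ < (s₀ * (z + 1) / (z - 1)).re →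
      (∫ ξ in Ioi (0 : ℝ),
          Complex.exp (-(s₀ * (z + 1) / (z - 1)) * ξ) * ((ξ : ℂ) * f ξ)) / (z - 1) =
        s₀⁻¹ * ((z - 1) ^ 2 / 2 * deriv M z + (z - 1) / 2 * M z) :=
  moebius_laplace_of_multiplication_by_xi_general δ s₀ hs₀ f C hf hbf M hM
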